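/- Let F = {C(o_i, r_i)}_{i ∈ I} be a countable family of closed spherical caps on S^3 ⊂ E^4 with radii r_i ∈ (0, π/2), whose interiors are pairwise disjoint, and which is unconditionally symmetric (for each i and each coordinate index m, the cap with center σ_m(o_i) and radius r_i belongs to F). Suppose F contains the eight caps of radius arcsin(1/√3) centered at the points (±1/√3, ±1/√3, ±1/√3, 0). Then every cap of F is contained in {x ∈ S^3 : ε⟨x, n⟩ > 0} for some sign ε ∈ {+1, -1} and some n ∈ {(1/√2, 1/√2, 0, 0), (1/√2, -1/√2, 0, 0), e_3, e_4}, i.e., every cap of F is separated by one of these four pairwise orthogonal greatspheres. -/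

import Mathlib

open scoped RealInnerProductSpace

/-- The point `(s/√2, t/√2, 0, 0)`-style center: `(1/√2)(s eᵢ + t eⱼ)` in `E⁴`. -/
noncomputable def twoTangentCenter (i j : Fin 4) (s t : ℝ) : EuclideanSpace ℝ (Fin 4) :=
  (Real.sqrt 2)⁻¹ •
    (s • EuclideanSpace.single i (1 : ℝ) + t • EuclideanSpace.single j (1 : ℝ))

/-- The point `(s₁/√3, s₂/√3, s₃/√3, 0)` in `E⁴`. -/
noncomputable def threeTangentCenter (s₁ s₂ s₃ : ℝ) : EuclideanSpace ℝ (Fin 4) :=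
  (Real.sqrt 3)⁻¹ • (s₁ • EuclideanSpace.single (0 : Fin 4) (1 : ℝ)
    + s₂ • EuclideanSpace.single 1 (1 : ℝ) + s₃ • EuclideanSpace.single 2 (1 : ℝ))

/-!
Suppose a cap `C(o, r)` of the family is separated by none of the four greatspheres, i.e.
`|⟪o, n⟫| ≤ sin r` for the four normals `n`. Then `|o₀| + |o₁| ≤ √2 sin r` and
`|o₂|, |o₃| ≤ sin r`, which forces `sin r ≥ 1/2`. Let `c` be the center of the three-tangent cap
in the orthant of `(o₀, o₁, o₂)`, so that `√3 ⟪o, c⟫ = |o₀| + |o₁| + |o₂| ≥ cos r`. This cap cannot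
be `C(o, r)` itself, whose center violates the first bound. Otherwise the two caps have disjoint
interiors, so `⟪o, c⟫ ≤ cos (r + arcsin (1/√3))`, i.e. `|o₀| + |o₁| + |o₂| ≤ √2 cos r - sin r`.
Hence `tan r ≤ √2 - 1 < 1/√3`, contradicting `sin r ≥ 1/2`.
-/

open Real InnerProductGeometry

section SphericalCaps

variable {E : Type*} [NormedAddCommGroup E] [InnerProductSpace ℝ E] {x y o c n : E}

lemma cos_le_inner_iff_angle_le (hx : ‖x‖ = 1) (hy : ‖y‖ = 1) {θ : ℝ} (h₀ : 0 ≤ θ)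
    (hπ : θ ≤ π) : cos θ ≤ ⟪x, y⟫ ↔ angle x y ≤ θ := by
  rw [← cos_angle_mul_norm_mul_norm, hx, hy, mul_one, mul_one]
  exact strictAntiOn_cos.le_iff_ge ⟨h₀, hπ⟩ ⟨angle_nonneg x y, angle_le_pi x y⟩

lemma cos_lt_inner_iff_angle_lt (hx : ‖x‖ = 1) (hy : ‖y‖ = 1) {θ : ℝ} (h₀ : 0 ≤ θ)
    (hπ : θ ≤ π) : cos θ < ⟪x, y⟫ ↔ angle x y < θ := by
  rw [← cos_angle_mul_norm_mul_norm, hx, hy, mul_one, mul_one]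
  exact strictAntiOn_cos.lt_iff_gt ⟨h₀, hπ⟩ ⟨angle_nonneg x y, angle_le_pi x y⟩

lemma cap_subset_hemisphere (ho : ‖o‖ = 1) (hn : ‖n‖ = 1) {r : ℝ} (hr₀ : 0 ≤ r)
    (hr : r ≤ π / 2) (hon : sin r < ⟪o, n⟫) :
    {x : E | ‖x‖ = 1 ∧ cos r ≤ ⟪x, o⟫} ⊆ {x : E | ‖x‖ = 1 ∧ 0 < ⟪x, n⟫} := by
  rintro x ⟨hx, hxo⟩
  refine ⟨hx, ?_⟩
  have hxo' : angle x o ≤ r := (cos_le_inner_iff_angle_le hx ho hr₀ (by linarith)).1 hxo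
  have hon' : angle o n < π / 2 - r := by
    rw [← cos_pi_div_two_sub] at hon
    exact (cos_lt_inner_iff_angle_lt ho hn (by linarith) (by linarith)).1 hon
  rw [← cos_pi_div_two, cos_lt_inner_iff_angle_lt hx hn (by positivity) (by linarith)]
  linarith [angle_le_angle_add_angle x o n]

lemma exists_sign_cap_subset_hemisphere (ho : ‖o‖ = 1) (hn : ‖n‖ = 1) {r : ℝ} (hr₀ : 0 ≤ r)
    (hr : r ≤ π / 2) (hon : sin r < |⟪o, n⟫|) :
    ∃ ε : ℝ, (ε = 1 ∨ ε = -1) ∧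
      {x : E | ‖x‖ = 1 ∧ cos r ≤ ⟪x, o⟫} ⊆ {x : E | ‖x‖ = 1 ∧ 0 < ε * ⟪x, n⟫} := by
  rcases abs_cases ⟪o, n⟫ with ⟨habs, -⟩ | ⟨habs, -⟩
  · refine ⟨1, Or.inl rfl, ?_⟩
    simpa using cap_subset_hemisphere ho hn hr₀ hr (habs ▸ hon)
  · refine ⟨-1, Or.inr rfl, ?_⟩
    have hn' : ‖-n‖ = 1 := by rwa [norm_neg]
    simpa using cap_subset_hemisphere ho hn' hr₀ hr (by rwa [inner_neg_right, ← habs])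

lemma exists_inner_eq_cos_of_angle_eq_add (ho : ‖o‖ = 1) (hc : ‖c‖ = 1) {α β : ℝ}
    (hα : 0 ≤ α) (hβ : 0 ≤ β) (hoc : angle o c = α + β) (hπ : α + β < π) :
    ∃ x : E, ‖x‖ = 1 ∧ ⟪x, o⟫ = cos α ∧ ⟪x, c⟫ = cos β := by
  have hoo : ⟪o, o⟫ = 1 := by rw [real_inner_self_eq_norm_sq, ho, one_pow]
  have hcc : ⟪c, c⟫ = 1 := by rw [real_inner_self_eq_norm_sq, hc, one_pow]
  have hoc' : ⟪o, c⟫ = cos (α + β) := by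
    rw [← hoc, ← cos_angle_mul_norm_mul_norm, ho, hc, mul_one, mul_one]
  rcases (add_nonneg hα hβ).eq_or_lt with h₀ | hpos
  · obtain ⟨rfl, rfl⟩ : α = 0 ∧ β = 0 := ⟨by linarith, by linarith⟩
    exact ⟨o, ho, by simpa using hoo, by simpa using hoc'⟩
  have hsin : sin (α + β) ≠ 0 := (sin_pos_of_pos_of_lt_pi hpos hπ).ne'
  set x : E := (sin β / sin (α + β)) • o + (sin α / sin (α + β)) • c
  have hxo : ⟪x, o⟫ = cos α := by
    simp only [x, inner_add_left, real_inner_smul_left, hoo, real_inner_comm o c ▸ hoc']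
    field_simp
    rw [sin_add, cos_add]
    linear_combination (-sin β) * sin_sq_add_cos_sq α
  have hxc : ⟪x, c⟫ = cos β := by
    simp only [x, inner_add_left, real_inner_smul_left, hcc, hoc']
    field_simp
    rw [sin_add, cos_add]
    linear_combination (-sin α) * sin_sq_add_cos_sq β
  have hxx : ⟪x, x⟫ = 1 := by
    simp only [x, inner_add_right, real_inner_smul_right, hxo, hxc]
    field_simp
    rw [sin_add]; ring
  refine ⟨x, ?_, hxo, hxc⟩
  rwa [real_inner_self_eq_norm_sq, pow_eq_one_iff_of_nonneg (norm_nonneg x) two_ne_zero] at hxx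

lemma inner_le_cos_add_of_disjoint_caps (ho : ‖o‖ = 1) (hc : ‖c‖ = 1) {r ρ : ℝ} (hr : 0 < r)
    (hρ : 0 < ρ) (hrρ : r + ρ ≤ π)
    (hdisj : Disjoint {x : E | ‖x‖ = 1 ∧ cos r < ⟪x, o⟫} {x : E | ‖x‖ = 1 ∧ cos ρ < ⟪x, c⟫}) :
    ⟪o, c⟫ ≤ cos (r + ρ) := by
  by_contra! hlt
  rw [cos_lt_inner_iff_angle_lt ho hc (by positivity) hrρ] at hlt
  have hθ : 0 ≤ angle o c := angle_nonneg o c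
  -- split the arc from `o` to `c` in the ratio `r : ρ`
  have hsplit : r * angle o c / (r + ρ) + ρ * angle o c / (r + ρ) = angle o c := by
    rw [← add_div, ← add_mul, mul_div_cancel_left₀ _ (by positivity)]
  obtain ⟨x, hx, hxo, hxc⟩ := exists_inner_eq_cos_of_angle_eq_add ho hc
    (by positivity) (by positivity) hsplit.symm (by linarith)
  refine Set.disjoint_left.1 hdisj ⟨hx, ?_⟩ ⟨hx, ?_⟩
  · rw [hxo]
    refine cos_lt_cos_of_nonneg_of_le_pi (by positivity) (by linarith) ?_
    rw [div_lt_iff₀ (by positivity)]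
    nlinarith
  · rw [hxc]
    refine cos_lt_cos_of_nonneg_of_le_pi (by positivity) (by linarith) ?_
    rw [div_lt_iff₀ (by positivity)]
    nlinarith

end SphericalCaps

lemma abs_add_abs_le_of_abs_add_le_of_abs_sub_le {a b c : ℝ} (h₁ : |a + b| ≤ c)
    (h₂ : |a - b| ≤ c) : |a| + |b| ≤ c := by
  rw [abs_le] at h₁ h₂
  cases abs_cases a <;> cases abs_cases b <;> linarith

lemma exists_sign_mul_eq_abs (a : ℝ) : ∃ s : ℝ, (s = 1 ∨ s = -1) ∧ s * a = |a| := by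
  rcases abs_cases a with ⟨h, -⟩ | ⟨h, -⟩
  · exact ⟨1, Or.inl rfl, by rw [h, one_mul]⟩
  · exact ⟨-1, Or.inr rfl, by rw [h, neg_one_mul]⟩

lemma sin_arcsin_inv_sqrt_three : sin (arcsin (√3)⁻¹) = (√3)⁻¹ :=
  sin_arcsin (by linarith [inv_nonneg.2 (sqrt_nonneg 3)])
    (inv_le_one_of_one_le₀ (one_le_sqrt.2 (by norm_num)))

lemma cos_add_arcsin_inv_sqrt_three (r : ℝ) :
    cos (r + arcsin (√3)⁻¹) = (√2 * cos r - sin r) / √3 := by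
  have h3 : (√3)⁻¹ ^ 2 = 1 / 3 := by rw [inv_pow, sq_sqrt (by norm_num), one_div]
  rw [cos_add, cos_arcsin, sin_arcsin_inv_sqrt_three, h3,
    show (1 : ℝ) - 1 / 3 = 2 / 3 by norm_num, sqrt_div' _ (by norm_num : (0:ℝ) ≤ 3)]
  ring

lemma real_inner_single_one_right {ι : Type*} [Fintype ι] [DecidableEq ι]
    (x : EuclideanSpace ℝ ι) (m : ι) : ⟪x, EuclideanSpace.single m (1 : ℝ)⟫ = x m := by
  simp [EuclideanSpace.inner_single_right]

lemma inner_twoTangentCenter (x : EuclideanSpace ℝ (Fin 4)) (i j : Fin 4) (s t : ℝ) :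
    ⟪x, twoTangentCenter i j s t⟫ = (s * x i + t * x j) / √2 := by
  simp only [twoTangentCenter, inner_add_right, real_inner_smul_right,
    real_inner_single_one_right]
  ring

lemma inner_threeTangentCenter (x : EuclideanSpace ℝ (Fin 4)) (s₁ s₂ s₃ : ℝ) :
    ⟪x, threeTangentCenter s₁ s₂ s₃⟫ = (s₁ * x 0 + s₂ * x 1 + s₃ * x 2) / √3 := by
  simp only [threeTangentCenter, inner_add_right, real_inner_smul_right,
    real_inner_single_one_right]
  ring

lemma norm_twoTangentCenter {i j : Fin 4} (hij : i ≠ j) {s t : ℝ} (hst : s ^ 2 + t ^ 2 = 2) :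
    ‖twoTangentCenter i j s t‖ = 1 := by
  have hi : twoTangentCenter i j s t i = s / √2 := by
    simp [twoTangentCenter, hij]; ring
  have hj : twoTangentCenter i j s t j = t / √2 := by
    simp [twoTangentCenter, hij.symm]; ring
  rw [← pow_eq_one_iff_of_nonneg (norm_nonneg _) two_ne_zero, ← real_inner_self_eq_norm_sq,
    inner_twoTangentCenter, hi, hj]
  field_simp
  rw [sq_sqrt (by norm_num)]
  linarith

lemma sum_sq_coords_eq_one {x : EuclideanSpace ℝ (Fin 4)} (hx : ‖x‖ = 1) :
    x 0 ^ 2 + x 1 ^ 2 + x 2 ^ 2 + x 3 ^ 2 = 1 := by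
  have h := EuclideanSpace.real_norm_sq_eq x
  rwa [hx, one_pow, Fin.sum_univ_four, eq_comm] at h

lemma false_of_abs_coords_le {a b t q S C : ℝ} (hsum : a ^ 2 + b ^ 2 + t ^ 2 + q ^ 2 = 1)
    (hSC : S ^ 2 + C ^ 2 = 1) (hab : |a| + |b| ≤ √2 * S) (ht : |t| ≤ S) (hq : |q| ≤ S)
    (habt : |a| + |b| + |t| ≤ √2 * C - S) : False := by
  have h2 : √2 ^ 2 = 2 := sq_sqrt (by norm_num)
  have hS : 0 ≤ S := (abs_nonneg t).trans ht
  have hq2 : q ^ 2 ≤ S ^ 2 := sq_le_sq' (abs_le.1 hq).1 (abs_le.1 hq).2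
  have ht2 : t ^ 2 ≤ S ^ 2 := sq_le_sq' (abs_le.1 ht).1 (abs_le.1 ht).2
  have hab2 : a ^ 2 + b ^ 2 ≤ 2 * S ^ 2 := by
    nlinarith [sq_abs a, sq_abs b, abs_nonneg a, abs_nonneg b, mul_self_le_mul_self
      (add_nonneg (abs_nonneg a) (abs_nonneg b)) hab]
  have hS4 : 1 ≤ 4 * S ^ 2 := by linarith
  have hCA : C ≤ |a| + |b| + |t| := by
    refine abs_le_of_sq_le_sq' ?_ (by positivity) |>.2
    nlinarith [sq_abs a, sq_abs b, sq_abs t, abs_nonneg a, abs_nonneg b, abs_nonneg t]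
  have hSC' : S ≤ (√2 - 1) * C := by linarith
  have hsq : S ^ 2 ≤ (3 - 2 * √2) * (1 - S ^ 2) := by
    have e : ((√2 - 1) * C) * ((√2 - 1) * C) = (3 - 2 * √2) * (1 - S ^ 2) := by
      linear_combination C ^ 2 * h2 + (3 - 2 * √2) * hSC
    nlinarith [mul_self_le_mul_self hS hSC']
  have hsqrt2 : 4 / 3 < √2 := by nlinarith [sqrt_nonneg 2]
  have hsqrt2' : √2 < 2 := by nlinarith [sqrt_nonneg 2]
  nlinarith [mul_le_mul_of_nonneg_left hS4 (by linarith : (0 : ℝ) ≤ 4 - 2 * √2)]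

noncomputable def separatingNormals : Set (EuclideanSpace ℝ (Fin 4)) :=
  {twoTangentCenter 0 1 1 1, twoTangentCenter 0 1 1 (-1),
    EuclideanSpace.single 2 (1 : ℝ), EuclideanSpace.single 3 (1 : ℝ)}

lemma norm_of_mem_separatingNormals {n : EuclideanSpace ℝ (Fin 4)}
    (hn : n ∈ separatingNormals) : ‖n‖ = 1 := by
  rcases hn with rfl | rfl | rfl | rfl
  · exact norm_twoTangentCenter (by decide) (by norm_num)
  · exact norm_twoTangentCenter (by decide) (by norm_num)
  · simp
  · simp

lemma abs_coords_le_of_forall_abs_inner_le {x : EuclideanSpace ℝ (Fin 4)} {S : ℝ}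
    (h : ∀ n ∈ separatingNormals, |⟪x, n⟫| ≤ S) :
    |x 0| + |x 1| ≤ √2 * S ∧ |x 2| ≤ S ∧ |x 3| ≤ S := by
  have h₁ := h _ (Set.mem_insert _ _)
  have h₂ := h _ (Set.mem_insert_of_mem _ (Set.mem_insert _ _))
  have h₃ := h _ (Set.mem_insert_of_mem _ (Set.mem_insert_of_mem _ (Set.mem_insert _ _)))
  have h₄ := h _ (Set.mem_insert_of_mem _ (Set.mem_insert_of_mem _
    (Set.mem_insert_of_mem _ rfl)))
  rw [inner_twoTangentCenter, abs_div, abs_of_pos (show (0 : ℝ) < √2 by positivity),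
    div_le_iff₀ (by positivity)] at h₁ h₂
  rw [real_inner_single_one_right] at h₃ h₄
  refine ⟨abs_add_abs_le_of_abs_add_le_of_abs_sub_le ?_ ?_, h₃, h₄⟩
  · simpa [mul_comm] using h₁
  · simpa [sub_eq_add_neg, mul_comm] using h₂

theorem eight_threeTangent_caps_family_separated_general
    (I : Type)
    (o : I → EuclideanSpace ℝ (Fin 4)) (r : I → ℝ)
    (ho : ∀ i, ‖o i‖ = 1) (hr : ∀ i, r i ∈ Set.Ioo 0 (Real.pi / 2))
    (hpack : ∀ i j, i ≠ j → Disjoint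
      {x : EuclideanSpace ℝ (Fin 4) | ‖x‖ = 1 ∧ Real.cos (r i) < ⟪x, o i⟫}
      {x : EuclideanSpace ℝ (Fin 4) | ‖x‖ = 1 ∧ Real.cos (r j) < ⟪x, o j⟫})
    (hmem : ∀ s₁ s₂ s₃ : ℝ, (s₁ = 1 ∨ s₁ = -1) → (s₂ = 1 ∨ s₂ = -1) → (s₃ = 1 ∨ s₃ = -1) →
      ∃ i, o i = threeTangentCenter s₁ s₂ s₃ ∧
        r i = Real.arcsin (Real.sqrt 3)⁻¹) :
    ∀ i, ∃ n ∈ ({twoTangentCenter 0 1 1 1, twoTangentCenter 0 1 1 (-1),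
        EuclideanSpace.single 2 (1 : ℝ), EuclideanSpace.single 3 (1 : ℝ)} :
        Set (EuclideanSpace ℝ (Fin 4))), ∃ ε : ℝ, (ε = 1 ∨ ε = -1) ∧
      {x : EuclideanSpace ℝ (Fin 4) | ‖x‖ = 1 ∧ Real.cos (r i) ≤ ⟪x, o i⟫} ⊆
        {x : EuclideanSpace ℝ (Fin 4) | ‖x‖ = 1 ∧ 0 < ε * ⟪x, n⟫} := by
  intro i
  by_cases hsep : ∃ n ∈ separatingNormals, sin (r i) < |⟪o i, n⟫|
  · obtain ⟨n, hn, hlt⟩ := hsep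
    obtain ⟨ε, hε, hsub⟩ := exists_sign_cap_subset_hemisphere (ho i)
      (norm_of_mem_separatingNormals hn) (hr i).1.le (hr i).2.le hlt
    exact ⟨n, hn, ε, hε, hsub⟩
  push Not at hsep
  exfalso
  obtain ⟨h01, h2, h3⟩ := abs_coords_le_of_forall_abs_inner_le hsep
  obtain ⟨s₁, hs₁, e₁⟩ := exists_sign_mul_eq_abs (o i 0)
  obtain ⟨s₂, hs₂, e₂⟩ := exists_sign_mul_eq_abs (o i 1)
  obtain ⟨s₃, hs₃, e₃⟩ := exists_sign_mul_eq_abs (o i 2)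
  obtain ⟨j, hoj, hrj⟩ := hmem s₁ s₂ s₃ hs₁ hs₂ hs₃
  have hinner : ⟪o i, o j⟫ = (|o i 0| + |o i 1| + |o i 2|) / √3 := by
    rw [hoj, inner_threeTangentCenter, e₁, e₂, e₃]
  by_cases hji : j = i
  · subst hji
    rw [real_inner_self_eq_norm_sq, ho j, one_pow, eq_div_iff (by positivity), one_mul] at hinner
    rw [hrj, sin_arcsin_inv_sqrt_three] at h01 h2
    have h3pos : 0 < √3 := by positivity
    have hsum : √3 ≤ (√2 + 1) * (√3)⁻¹ := by linarith
    rw [le_mul_inv_iff₀ h3pos, mul_self_sqrt (by norm_num)] at hsum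
    nlinarith [sq_sqrt (show (0 : ℝ) ≤ 2 by norm_num), sqrt_nonneg 2]
  · have hle := inner_le_cos_add_of_disjoint_caps (ho i) (ho j) (hr i).1 (hr j).1
      (by linarith [(hr i).2, (hr j).2]) (hpack i j (Ne.symm hji))
    rw [hinner, hrj, cos_add_arcsin_inv_sqrt_three,
      div_le_div_iff_of_pos_right (by positivity)] at hle
    exact false_of_abs_coords_le (sum_sq_coords_eq_one (ho i)) (sin_sq_add_cos_sq _) h01 h2 h3 hle

/-- Let `F` be a countable unconditionally symmetric packing of closed
spherical caps on `S³ ⊂ E⁴` containing the eight caps of radius `arcsin(1/√3)` centered at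
`(±1/√3, ±1/√3, ±1/√3, 0)`. Then every cap of `F` is separated by one of the four pairwise
orthogonal greatspheres with normals `(1/√2, 1/√2, 0, 0)`, `(1/√2, -1/√2, 0, 0)`, `e₃`, `e₄`. -/
theorem eight_threeTangent_caps_family_separated
    (I : Type) [Countable I]
    (o : I → EuclideanSpace ℝ (Fin 4)) (r : I → ℝ)
    (ho : ∀ i, ‖o i‖ = 1) (hr : ∀ i, r i ∈ Set.Ioo 0 (Real.pi / 2))
    (hpack : ∀ i j, i ≠ j → Disjoint
      {x : EuclideanSpace ℝ (Fin 4) | ‖x‖ = 1 ∧ Real.cos (r i) < ⟪x, o i⟫}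
      {x : EuclideanSpace ℝ (Fin 4) | ‖x‖ = 1 ∧ Real.cos (r j) < ⟪x, o j⟫})
    (hsym : ∀ i, ∀ m : Fin 4, ∃ j,
      o j = o i - (2 * o i m) • EuclideanSpace.single m (1 : ℝ) ∧ r j = r i)
    (hmem : ∀ s₁ s₂ s₃ : ℝ, (s₁ = 1 ∨ s₁ = -1) → (s₂ = 1 ∨ s₂ = -1) → (s₃ = 1 ∨ s₃ = -1) →
      ∃ i, o i = threeTangentCenter s₁ s₂ s₃ ∧
        r i = Real.arcsin (Real.sqrt 3)⁻¹) :
    ∀ i, ∃ n ∈ ({twoTangentCenter 0 1 1 1, twoTangentCenter 0 1 1 (-1),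
        EuclideanSpace.single 2 (1 : ℝ), EuclideanSpace.single 3 (1 : ℝ)} :
        Set (EuclideanSpace ℝ (Fin 4))), ∃ ε : ℝ, (ε = 1 ∨ ε = -1) ∧
      {x : EuclideanSpace ℝ (Fin 4) | ‖x‖ = 1 ∧ Real.cos (r i) ≤ ⟪x, o i⟫} ⊆
        {x : EuclideanSpace ℝ (Fin 4) | ‖x‖ = 1 ∧ 0 < ε * ⟪x, n⟫} :=
  eight_threeTangent_caps_family_separated_general I o r ho hr hpack hmem
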